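/- Let n ≥ 3, let g, f be formal power series over ℤ/3ℤ with f(0) = 0 admitting an A-sequence (there is A over ℤ/3ℤ with A(0) ≠ 0 and f = z·A(f)), let i ∈ {1,2,3}, and set ℓ_i = ⌊(n−i)/3⌋ + 1. Then the induced subgraph ⟨V_i⟩ of the oriented Riordan graph G_n^σ(g,f) is a null graph (has no arcs), i.e. [z^{3(u−1)+i−2}] g f^{3(v−1)+i−1} = 0 for all 1 ≤ v < u ≤ ℓ_i, if and only if [z^{3m+i−2}] g f^{i−1} = 0 for all integers m with 1 ≤ m ≤ ℓ_i − 1. -/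

import Mathlib

/-!
Over `ZMod 3` the Frobenius makes `(f ^ (v - 1)) ^ 3` a series in `z³`, so the entry
`[z^{3(u-1)+i-2}] g f^{i-1} (f^{v-1})³` of `⟨V_i⟩` is a combination of the coefficients
`[z^{3m+i-2}] g f^{i-1}` with `m ≤ u - 1`. Those with `m ≥ 1` are the right-hand side, and the one
with `m = 0` vanishes because `f ^ (i - 1)` has order at least `i - 1`. Conversely, the first
column `v = 1` of `⟨V_i⟩` is exactly the right-hand side.
-/

open PowerSeries

/-- Substitution `A(f)` of a power series `f` into a power series `A`.
When `f(0) = 0`, the coefficient of `z^n` in `A(f)` only involves `f^k` for `k ≤ n`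
(since `f^k` has order `≥ k`), so the finite sum below is the usual composition. -/
noncomputable def psComp {R : Type*} [CommRing R] (A f : PowerSeries R) : PowerSeries R :=
  PowerSeries.mk fun n => ∑ k ∈ Finset.range (n + 1), coeff k A * coeff n (f ^ k)

namespace PowerSeries

variable {R : Type*} [CommRing R]

theorem map_frobenius_expand (p : ℕ) [ExpChar R p] (f : R⟦X⟧) :
    map (frobenius R p) (expand p (expChar_ne_zero R p) f) = f ^ p :=
  MvPowerSeries.map_frobenius_expand p _

theorem coeff_pow_char_of_not_dvd (p : ℕ) [ExpChar R p] (f : R⟦X⟧) {n : ℕ} (hn : ¬p ∣ n) :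
    coeff n (f ^ p) = 0 := by
  rw [← map_frobenius_expand, coeff_map, coeff_expand_of_not_dvd _ _ _ hn, map_zero]

theorem coeff_mul_pow_char_eq_zero (p : ℕ) [ExpChar R p] {g : R⟦X⟧} (F : R⟦X⟧) {n : ℕ}
    (hg : ∀ k, p * k ≤ n → coeff (n - p * k) g = 0) : coeff n (g * F ^ p) = 0 := by
  rw [coeff_mul]
  refine Finset.sum_eq_zero fun ⟨a, b⟩ hab => ?_
  rw [Finset.HasAntidiagonal.mem_antidiagonal] at hab
  by_cases hb : p ∣ b
  · obtain ⟨k, rfl⟩ := hb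
    rw [Nat.eq_sub_of_add_eq hab, hg k (by omega), zero_mul]
  · rw [coeff_pow_char_of_not_dvd p F hb, mul_zero]

theorem coeff_mul_pow_eq_zero_of_lt (g : R⟦X⟧) {f : R⟦X⟧} (hf : constantCoeff f = 0) {a k : ℕ}
    (ha : a < k) : coeff a (g * f ^ k) = 0 :=
  X_pow_dvd_iff.mp ((pow_dvd_pow_of_dvd (X_dvd_iff.mpr hf) k).mul_left g) a ha

end PowerSeries

theorem induced_subgraph_null_iff_general (n : ℕ)
    (g f : PowerSeries (ZMod 3))
    (hf : constantCoeff f = 0)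
    (i : ℕ) (hi : i = 1 ∨ i = 2 ∨ i = 3) :
    (∀ u v : ℕ, 1 ≤ v → v < u → u ≤ (n - i) / 3 + 1 →
        coeff (3 * (u - 1) + i - 2) (g * f ^ (3 * (v - 1) + i - 1)) = 0) ↔
    (∀ m : ℕ, 1 ≤ m → m ≤ (n - i) / 3 →
        coeff (3 * m + i - 2) (g * f ^ (i - 1)) = 0) := by
  constructor
  · intro H m hm1 hm2
    simpa using H (m + 1) 1 le_rfl (by omega) (by omega)
  · intro H u v hv huv hu
    have hpow : g * f ^ (3 * (v - 1) + i - 1) = g * f ^ (i - 1) * (f ^ (v - 1)) ^ 3 := by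
      rw [← pow_mul, mul_assoc, ← pow_add]
      congr 2
      omega
    rw [hpow]
    refine coeff_mul_pow_char_eq_zero 3 _ fun k hk => ?_
    rcases lt_or_ge k (u - 1) with hk_lt | hk_ge
    · have hidx : 3 * (u - 1) + i - 2 - 3 * k = 3 * (u - 1 - k) + i - 2 := by omega
      rw [hidx]
      exact H (u - 1 - k) (by omega) (by omega)
    · exact coeff_mul_pow_eq_zero_of_lt g hf (by omega)

/-- For `n ≥ 3` and `i ∈ {1,2,3}`, with `ℓ_i = ⌊(n−i)/3⌋ + 1`, the induced subgraph
`⟨V_i⟩` of the oriented Riordan graph `G_n^σ(g,f)` is a null graph (all entries of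
its skew-adjacency matrix vanish) if and only if `[z^{3m+i−2}] g f^{i−1} = 0` for all
`1 ≤ m ≤ ℓ_i − 1`. -/
theorem induced_subgraph_null_iff (n : ℕ) (hn : 3 ≤ n)
    (g f A : PowerSeries (ZMod 3))
    (hf : constantCoeff f = 0)
    (hA : constantCoeff A ≠ 0)
    (hfA : f = X * psComp A f)
    (i : ℕ) (hi : i = 1 ∨ i = 2 ∨ i = 3) :
    (∀ u v : ℕ, 1 ≤ v → v < u → u ≤ (n - i) / 3 + 1 →
        coeff (3 * (u - 1) + i - 2) (g * f ^ (3 * (v - 1) + i - 1)) = 0) ↔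
    (∀ m : ℕ, 1 ≤ m → m ≤ (n - i) / 3 →
        coeff (3 * m + i - 2) (g * f ^ (i - 1)) = 0) :=
  induced_subgraph_null_iff_general n g f hf i hi
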